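/- arXiv:math/0405326 — 2 statements merged into one kernel-verified Lean document; each statement's English description precedes it below -/
import Mathlib

section
/- Suppose F is a regular class of first-order formulas in the language of digraphs and the digraph G is definable in F (some sentence in F defines G). Then L_F(G) < Tower(D_F(G) + log* D_F(G) + 2), where D_F(G) (respectively L_F(G)) is the minimum quantifier rank (respectively minimum length) of a sentence in F defining G. -/
namespace PaperFO

/-- First-order formulas in a language with equality `eq` and one binary
relation symbol `rel` (adjacency `~` for graphs, the arc relation `↦` for
digraphs).  Variables are indexed by natural numbers (variable `xᵢ` of the
paper corresponds to `i - 1 : ℕ`). -/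
inductive Fml : Type
  | eq : ℕ → ℕ → Fml
  | rel : ℕ → ℕ → Fml
  | not : Fml → Fml
  | and : Fml → Fml → Fml
  | or : Fml → Fml → Fml
  | all : ℕ → Fml → Fml
  | ex : ℕ → Fml → Fml

namespace Fml

/-- Truth of a formula in the structure `(V, r)` under the assignment `σ`. -/
def eval {V : Type} (r : V → V → Prop) (σ : ℕ → V) : Fml → Prop
  | eq i j => σ i = σ j
  | rel i j => r (σ i) (σ j)
  | not φ => ¬ eval r σ φ
  | and φ ψ => eval r σ φ ∧ eval r σ ψ
  | or φ ψ => eval r σ φ ∨ eval r σ ψ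
  | all i φ => ∀ v : V, eval r (Function.update σ i v) φ
  | ex i φ => ∃ v : V, eval r (Function.update σ i v) φ

/-- The free variables of a formula. -/
def freeVars : Fml → Finset ℕ
  | eq i j => {i, j}
  | rel i j => {i, j}
  | not φ => freeVars φ
  | and φ ψ => freeVars φ ∪ freeVars ψ
  | or φ ψ => freeVars φ ∪ freeVars ψ
  | all i φ => (freeVars φ).erase i
  | ex i φ => (freeVars φ).erase i

/-- A sentence is a formula without free variables. -/
def IsSentence (φ : Fml) : Prop := φ.freeVars = ∅

/-- The quantifier depth (= quantifier rank) of a formula: the maximum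
number of nested quantifiers. -/
def depth : Fml → ℕ
  | eq _ _ => 0
  | rel _ _ => 0
  | not φ => depth φ
  | and φ ψ => max (depth φ) (depth ψ)
  | or φ ψ => max (depth φ) (depth ψ)
  | all _ φ => depth φ + 1
  | ex _ φ => depth φ + 1

/-- A formula is atomic if it is of the form `x = y` or `x ~ y`. -/
def IsAtomic : Fml → Prop
  | eq _ _ => True
  | rel _ _ => True
  | _ => False

/-- Negations occur only in front of atomic subformulas. -/
def NegAtomic : Fml → Prop
  | eq _ _ => True
  | rel _ _ => True
  | not φ => IsAtomic φ
  | and φ ψ => NegAtomic φ ∧ NegAtomic ψ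
  | or φ ψ => NegAtomic φ ∧ NegAtomic ψ
  | all _ φ => NegAtomic φ
  | ex _ φ => NegAtomic φ

/-- The set of maximal sequences of nested quantifiers of a formula,
recorded as lists of Booleans read from the outermost quantifier inwards
(`true` = `∃`, `false` = `∀`).  Every sequence of nested quantifiers of the
formula is a (contiguous) subsequence of one of these. -/
def qstrings : Fml → Set (List Bool)
  | eq _ _ => {[]}
  | rel _ _ => {[]}
  | not φ => qstrings φ
  | and φ ψ => qstrings φ ∪ qstrings ψ
  | or φ ψ => qstrings φ ∪ qstrings ψ
  | all _ φ => (List.cons false) '' qstrings φ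
  | ex _ φ => (List.cons true) '' qstrings φ

end Fml

/-- The number of quantifier alternations (occurrences of `∀∃` or `∃∀`) in a
sequence of nested quantifiers. -/
def altCount : List Bool → ℕ
  | [] => 0
  | [_] => 0
  | a :: b :: l => (if a = b then 0 else 1) + altCount (b :: l)

namespace Fml

/-- Every sequence of nested quantifiers has at most `a` quantifier
alternations. -/
def AltLe (φ : Fml) (a : ℕ) : Prop := ∀ s ∈ φ.qstrings, altCount s ≤ a

/-- An `a`-alternating formula: negations occur only in front of atomic
subformulas and every sequence of nested quantifiers has at most `a`
quantifier alternations. -/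
def AltFml (a : ℕ) (φ : Fml) : Prop := φ.NegAtomic ∧ φ.AltLe a

/-- A 0-alternating formula: negations occur only in front of atomic
subformulas and no sequence of nested quantifiers contains a quantifier
alternation. -/
def ZeroAlt (φ : Fml) : Prop := φ.NegAtomic ∧ φ.AltLe 0

end Fml

/-- `logStar n` is the minimum number of iterations of the binary logarithm
needed to bring `n` to `1` or below. -/
def logStar (n : ℕ) : ℕ :=
  if h : n ≤ 1 then 0 else logStar (Nat.log 2 n) + 1
decreasing_by exact Nat.log_lt_self 2 (by omega)

/-- The tower function: `tower 0 = 1`, `tower (i+1) = 2 ^ tower i`. -/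
def tower : ℕ → ℕ
  | 0 => 1
  | i + 1 => 2 ^ tower i

end PaperFO

namespace PaperFO

/-- A sentence is true on the digraph `(V, r)` (digraphs interpret `Fml.rel`
as the arc relation `↦`). -/
def DModels {V : Type} (r : V → V → Prop) (φ : Fml) : Prop :=
  ∀ σ : ℕ → V, φ.eval r σ

/-- Isomorphism of digraphs. -/
def DIso {V W : Type} (r : V → V → Prop) (r' : W → W → Prop) : Prop :=
  ∃ e : V ≃ W, ∀ a b : V, r a b ↔ r' (e a) (e b)

/-- The sentence `φ` defines the digraph `(V, r)`: it is a sentence, it is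
true on `(V, r)`, and it fails on every (finite, nonempty) digraph not
isomorphic to `(V, r)`. -/
def DDefines {V : Type} (r : V → V → Prop) (φ : Fml) : Prop :=
  φ.IsSentence ∧ DModels r φ ∧
    ∀ (W : Type) (_ : Fintype W) (_ : Nonempty W) (r' : W → W → Prop),
      ¬ DIso r r' → ¬ DModels r' φ

end PaperFO

namespace PaperFO
namespace Fml

/-- The length of a formula: the total number of symbols (an atomic formula
`x = y` or `x ~ y` contributes `3` symbols, a negation `1`, a binary
connective `1`, and a quantifier together with its variable `2`). -/
def len : Fml → ℕ
  | eq _ _ => 3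
  | rel _ _ => 3
  | not φ => len φ + 1
  | and φ ψ => len φ + len ψ + 1
  | or φ ψ => len φ + len ψ + 1
  | all _ φ => len φ + 2
  | ex _ φ => len φ + 2

/-- The number of occurrences of the existential quantifier. -/
def exCount : Fml → ℕ
  | eq _ _ => 0
  | rel _ _ => 0
  | not φ => exCount φ
  | and φ ψ => exCount φ + exCount ψ
  | or φ ψ => exCount φ + exCount ψ
  | all _ φ => exCount φ
  | ex _ φ => exCount φ + 1

/-- The total number of quantifier occurrences. -/
def qCount : Fml → ℕ
  | eq _ _ => 0
  | rel _ _ => 0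
  | not φ => qCount φ
  | and φ ψ => qCount φ + qCount ψ
  | or φ ψ => qCount φ + qCount ψ
  | all _ φ => qCount φ + 1
  | ex _ φ => qCount φ + 1

/-- Implication `A ⇒ B`, a shorthand for `(¬ A) ∨ B`. -/
def imp (A B : Fml) : Fml := .or (.not A) B

end Fml
end PaperFO

namespace PaperFO
namespace Fml

/-- All variables occurring (free or bound) in a formula. -/
def vars : Fml → Finset ℕ
  | eq i j => {i, j}
  | rel i j => {i, j}
  | not φ => vars φ
  | and φ ψ => vars φ ∪ vars ψ
  | or φ ψ => vars φ ∪ vars ψ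
  | all i φ => insert i (vars φ)
  | ex i φ => insert i (vars φ)

/-- Substitution of the variable `j` for the free occurrences of the
variable `i`. -/
def subst (i j : ℕ) : Fml → Fml
  | eq a b => eq (if a = i then j else a) (if b = i then j else b)
  | rel a b => rel (if a = i then j else a) (if b = i then j else b)
  | not φ => not (subst i j φ)
  | and φ ψ => and (subst i j φ) (subst i j ψ)
  | or φ ψ => or (subst i j φ) (subst i j ψ)
  | all a φ => if a = i then all a φ else all a (subst i j φ)
  | ex a φ => if a = i then ex a φ else ex a (subst i j φ)

/-- One step of renaming a bound variable (possibly deep inside the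
formula). -/
inductive RenStep : Fml → Fml → Prop
  | allRen (i j : ℕ) (φ : Fml) : j ∉ φ.vars → RenStep (.all i φ) (.all j (φ.subst i j))
  | exRen (i j : ℕ) (φ : Fml) : j ∉ φ.vars → RenStep (.ex i φ) (.ex j (φ.subst i j))
  | notC {φ φ' : Fml} : RenStep φ φ' → RenStep (.not φ) (.not φ')
  | andL {φ φ' ψ : Fml} : RenStep φ φ' → RenStep (.and φ ψ) (.and φ' ψ)
  | andR {φ ψ ψ' : Fml} : RenStep ψ ψ' → RenStep (.and φ ψ) (.and φ ψ')
  | orL {φ φ' ψ : Fml} : RenStep φ φ' → RenStep (.or φ ψ) (.or φ' ψ)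
  | orR {φ ψ ψ' : Fml} : RenStep ψ ψ' → RenStep (.or φ ψ) (.or φ ψ')
  | allC {i : ℕ} {φ φ' : Fml} : RenStep φ φ' → RenStep (.all i φ) (.all i φ')
  | exC {i : ℕ} {φ φ' : Fml} : RenStep φ φ' → RenStep (.ex i φ) (.ex i φ')

/-- `B` is obtained from `A` by renaming bound variables. -/
def Renames (A B : Fml) : Prop := Relation.ReflTransGen RenStep A B

/-- `Subf B A` : `B` is a subformula of `A`. -/
inductive Subf : Fml → Fml → Prop
  | refl (φ : Fml) : Subf φ φ
  | notS {ψ φ : Fml} : Subf ψ φ → Subf ψ (.not φ)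
  | andL {ψ φ χ : Fml} : Subf ψ φ → Subf ψ (.and φ χ)
  | andR {ψ φ χ : Fml} : Subf ψ χ → Subf ψ (.and φ χ)
  | orL {ψ φ χ : Fml} : Subf ψ φ → Subf ψ (.or φ χ)
  | orR {ψ φ χ : Fml} : Subf ψ χ → Subf ψ (.or φ χ)
  | allS {ψ φ : Fml} {i : ℕ} : Subf ψ φ → Subf ψ (.all i φ)
  | exS {ψ φ : Fml} {i : ℕ} : Subf ψ φ → Subf ψ (.ex i φ)

/-- The maximal sequences of nested quantifiers of a formula together with
the quantified variables (`true` = `∃`, `false` = `∀`). -/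
def qvseqs : Fml → Set (List (Bool × ℕ))
  | eq _ _ => {[]}
  | rel _ _ => {[]}
  | not φ => qvseqs φ
  | and φ ψ => qvseqs φ ∪ qvseqs ψ
  | or φ ψ => qvseqs φ ∪ qvseqs ψ
  | all i φ => (List.cons (false, i)) '' qvseqs φ
  | ex i φ => (List.cons (true, i)) '' qvseqs φ

end Fml

/-- A formula `A(x_1,…,x_s)` of quantifier rank `k - s` is normal if all
negations stay in front of atomic subformulas, `A` has occurrences of the
variables `x_1, …, x_k` only, its free variables are exactly `x_1, …, x_s`,
and every sequence of nested quantifiers of `A` has length `k - s` and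
quantifies the variables `x_{s+1}, …, x_k` exactly in this order.
(Variable `x_i` is represented by `i - 1 : ℕ`.) -/
def Normal (s k : ℕ) (A : Fml) : Prop :=
  A.NegAtomic ∧ A.freeVars = Finset.range s ∧ A.vars ⊆ Finset.range k ∧
    A.depth = k - s ∧
    ∀ t ∈ A.qvseqs, t.map Prod.snd = List.range' s (k - s)

/-- Two formulas are (logically) equivalent if they have the same truth
value in every finite nonempty digraph under every assignment. -/
def FmlEquiv (A B : Fml) : Prop :=
  ∀ (W : Type) (_ : Fintype W) (_ : Nonempty W) (r : W → W → Prop) (σ : ℕ → W),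
    A.eval r σ ↔ B.eval r σ

/-- A regular class `F` of first-order formulas: `F` is closed under
subformulas and under renaming of bound variables; with each formula
`A(x_1,…,x_s)` it contains a normal form of `A` (a normal formula of the
same quantifier rank equivalent to `A`); and for each `k ≥ 1` it has a
pattern set `P^k ⊆ {∀,∃}^k` such that a normal sentence `A` of quantifier
rank `k` belongs to `F` iff every sequence of nested quantifiers of `A`
belongs to `P^k`. -/
def Regular (F : Set Fml) : Prop :=
  (∀ A ∈ F, ∀ B : Fml, Fml.Subf B A → B ∈ F) ∧
  (∀ A ∈ F, ∀ B : Fml, Fml.Renames A B → B ∈ F) ∧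
  (∀ A ∈ F, ∀ s : ℕ, A.freeVars = Finset.range s →
    ∃ A' ∈ F, Normal s (s + A.depth) A' ∧ A'.depth = A.depth ∧ FmlEquiv A A') ∧
  (∀ k : ℕ, 1 ≤ k → ∃ P : Set (List Bool), (∀ t ∈ P, t.length = k) ∧
    ∀ A : Fml, Normal 0 k A → (A ∈ F ↔ A.qstrings ⊆ P))

end PaperFO

/-!
Let `D` be the least quantifier rank of a sentence of `F` defining `G`; then `D ≥ 2`, because a
sentence of rank at most one cannot tell `G` from two disjoint copies of `G`. Replace such a
sentence by its normal form `A` in `F`, and let `q` be the set of quantifier strings of `A`.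
The Hintikka formula of `G` of rank `D`, pruned so that it only uses the quantifier strings in
`q`, is again normal with quantifier strings in `q`, so by the pattern-set condition it lies in
`F`. It holds in `G`, and by a back-and-forth induction every digraph satisfying it satisfies
`A`; hence it defines `G`. Its length is controlled by counting: there are at most
`D ^ D * 2 ^ (D * D)` atomic types of `D` variables, and one more quantifier level at most
exponentiates the number of formulas, which yields the bound
`Tower (D + log* D + 2)`.
-/

namespace PaperFO

open Fml
open Function (update Surjective)

namespace Fml

theorem qvseqs_nonempty : ∀ φ : Fml, φ.qvseqs.Nonempty
  | eq _ _ | rel _ _ => ⟨[], rfl⟩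
  | not φ => qvseqs_nonempty φ
  | and φ _ | or φ _ => (qvseqs_nonempty φ).mono Set.subset_union_left
  | all _ φ | ex _ φ => (qvseqs_nonempty φ).image _

theorem eval_congr {W : Type} (r : W → W → Prop) :
    ∀ (φ : Fml) {σ σ' : ℕ → W}, (∀ i ∈ φ.freeVars, σ i = σ' i) →
      (φ.eval r σ ↔ φ.eval r σ')
  | eq a b, σ, σ', h | rel a b, σ, σ', h => by
    simp [eval, h a (by simp [freeVars]), h b (by simp [freeVars])]
  | not φ, σ, σ', h => not_congr (eval_congr r φ h)
  | and φ ψ, σ, σ', h => and_congr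
      (eval_congr r φ fun i hi => h i (Finset.mem_union_left _ hi))
      (eval_congr r ψ fun i hi => h i (Finset.mem_union_right _ hi))
  | or φ ψ, σ, σ', h => or_congr
      (eval_congr r φ fun i hi => h i (Finset.mem_union_left _ hi))
      (eval_congr r ψ fun i hi => h i (Finset.mem_union_right _ hi))
  | all i φ, σ, σ', h => forall_congr' fun v => eval_congr r φ fun k hk => by
      by_cases hki : k = i
      · subst hki; simp
      · simp [hki, h k (Finset.mem_erase.2 ⟨hki, hk⟩)]
  | ex i φ, σ, σ', h => exists_congr fun v => eval_congr r φ fun k hk => by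
      by_cases hki : k = i
      · subst hki; simp
      · simp [hki, h k (Finset.mem_erase.2 ⟨hki, hk⟩)]

theorem eval_of_isSentence {W : Type} {r : W → W → Prop} {φ : Fml} (hφ : φ.IsSentence)
    (σ σ' : ℕ → W) : φ.eval r σ ↔ φ.eval r σ' :=
  eval_congr r φ fun i hi => absurd (hφ ▸ hi) (Finset.notMem_empty i)

/-! ### Sentences of quantifier rank at most one -/

def EqTrivial : Fml → Prop
  | eq i j => i = j
  | rel _ _ => True
  | not φ => EqTrivial φ
  | and φ ψ => EqTrivial φ ∧ EqTrivial ψ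
  | or φ ψ => EqTrivial φ ∧ EqTrivial ψ
  | all _ φ => EqTrivial φ
  | ex _ φ => EqTrivial φ

theorem eval_comp_iff_of_eqTrivial {V W : Type} {r : V → V → Prop} {r' : W → W → Prop}
    {p : W → V} (hp : Surjective p) (hr : ∀ a b, r' a b ↔ r (p a) (p b)) :
    ∀ {φ : Fml}, φ.EqTrivial → ∀ σ : ℕ → W, (φ.eval r' σ ↔ φ.eval r (p ∘ σ))
  | eq i j, (h : i = j), σ => by subst h; simp [eval]
  | rel i j, _, σ => hr _ _
  | not φ, h, σ => not_congr (eval_comp_iff_of_eqTrivial hp hr (φ := φ) h σ)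
  | and φ ψ, h, σ => and_congr (eval_comp_iff_of_eqTrivial hp hr (φ := φ) h.1 σ)
      (eval_comp_iff_of_eqTrivial hp hr (φ := ψ) h.2 σ)
  | or φ ψ, h, σ => or_congr (eval_comp_iff_of_eqTrivial hp hr (φ := φ) h.1 σ)
      (eval_comp_iff_of_eqTrivial hp hr (φ := ψ) h.2 σ)
  | all i φ, h, σ => by
    simp only [eval, eval_comp_iff_of_eqTrivial hp hr (φ := φ) h, Function.comp_update]
    exact (hp.forall (p := fun v => eval r (update (p ∘ σ) i v) φ)).symm
  | ex i φ, h, σ => by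
    simp only [eval, eval_comp_iff_of_eqTrivial hp hr (φ := φ) h, Function.comp_update]
    exact (hp.exists (p := fun v => eval r (update (p ∘ σ) i v) φ)).symm

theorem eqTrivial_of_depth_eq_zero {i : ℕ} :
    ∀ {φ : Fml}, φ.depth = 0 → φ.freeVars ⊆ {i} → φ.EqTrivial
  | eq a b, _, h => by
    simp only [freeVars, Finset.insert_subset_iff, Finset.singleton_subset_iff,
      Finset.mem_singleton] at h
    exact h.1.trans h.2.symm
  | rel _ _, _, _ => trivial
  | not φ, h0, h => eqTrivial_of_depth_eq_zero (φ := φ) h0 h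
  | and φ ψ, h0, h | or φ ψ, h0, h => by
    simp only [depth, Nat.max_eq_zero_iff, freeVars, Finset.union_subset_iff] at h0 h
    exact ⟨eqTrivial_of_depth_eq_zero h0.1 h.1, eqTrivial_of_depth_eq_zero h0.2 h.2⟩

/-- In a sentence of quantifier rank at most one, every atom lies in the scope of a single
quantifier, so it mentions only one variable. -/
theorem eqTrivial_of_depth_le_one : ∀ {φ : Fml}, φ.depth ≤ 1 → φ.IsSentence → φ.EqTrivial
  | eq a b, _, h | rel a b, _, h => absurd h (Finset.nonempty_iff_ne_empty.1 ⟨a, by simp [freeVars]⟩)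
  | not φ, h1, h => eqTrivial_of_depth_le_one (φ := φ) h1 h
  | and φ ψ, h1, h | or φ ψ, h1, h => by
    simp only [IsSentence, depth, sup_le_iff, freeVars, Finset.union_eq_empty] at h1 h
    exact ⟨eqTrivial_of_depth_le_one h1.1 h.1, eqTrivial_of_depth_le_one h1.2 h.2⟩
  | all i φ, h1, h | ex i φ, h1, h => by
    simp only [IsSentence, depth, freeVars, Finset.erase_eq_empty_iff] at h1 h
    refine eqTrivial_of_depth_eq_zero (φ := φ) (i := i) (by omega) ?_
    rcases h with h | h <;> simp [h]

end Fml

/-- A sentence of quantifier rank at most one cannot tell `G` from two disjoint copies of `G`. -/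
theorem two_le_depth_of_defines {V : Type} [Fintype V] [Nonempty V] {r : V → V → Prop}
    {φ : Fml} (hφ : DDefines r φ) : 2 ≤ φ.depth := by
  by_contra! hlt
  obtain ⟨hsent, hmod, hother⟩ := hφ
  let p : V ⊕ V → V := Sum.elim id id
  have hp : Surjective p := fun v => ⟨Sum.inl v, rfl⟩
  refine hother (V ⊕ V) inferInstance inferInstance (fun a b => r (p a) (p b)) ?_ fun σ =>
    (eval_comp_iff_of_eqTrivial hp (fun _ _ => Iff.rfl)
      (eqTrivial_of_depth_le_one (by omega) hsent) σ).2 (hmod _)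
  rintro ⟨e, -⟩
  have := Fintype.card_congr e
  simp only [Fintype.card_sum] at this
  exact (Fintype.card_pos (α := V)).ne' (by omega)

/-! ### Iterated connectives -/

def bigConn (c : Fml → Fml → Fml) : List Fml → Fml
  | [] => .eq 0 0
  | [φ] => φ
  | φ :: ψ :: l => c φ (bigConn c (ψ :: l))

theorem bigConn_induction {c : Fml → Fml → Fml} (P : Fml → Prop)
    (hc : ∀ φ ψ, P φ → P ψ → P (c φ ψ)) :
    ∀ {L : List Fml}, (L = [] → P (.eq 0 0)) → (∀ φ ∈ L, P φ) → P (bigConn c L)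
  | [], h0, _ => h0 rfl
  | [φ], _, h => h φ (by simp)
  | φ :: ψ :: l, _, h => hc _ _ (h φ (by simp))
      (bigConn_induction P hc (by simp) fun χ hχ => h χ (List.mem_cons_of_mem _ hχ))

theorem eval_bigConn_and {W : Type} (r : W → W → Prop) (σ : ℕ → W) :
    ∀ L : List Fml, (bigConn .and L).eval r σ ↔ ∀ φ ∈ L, φ.eval r σ
  | [] => by simp [bigConn, eval]
  | [φ] => by simp [bigConn]
  | φ :: ψ :: l => by
    rw [bigConn, eval, eval_bigConn_and r σ (ψ :: l), List.forall_mem_cons (l := ψ :: l)]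

theorem eval_bigConn_or {W : Type} (r : W → W → Prop) (σ : ℕ → W) :
    ∀ {L : List Fml}, L ≠ [] → ((bigConn .or L).eval r σ ↔ ∃ φ ∈ L, φ.eval r σ)
  | [], h => absurd rfl h
  | [φ], _ => by simp [bigConn]
  | φ :: ψ :: l, _ => by
    simp only [bigConn, eval, eval_bigConn_or r σ (List.cons_ne_nil ψ l), List.exists_mem_cons_iff]

theorem len_bigConn_le {c : Fml → Fml → Fml} (hc : ∀ φ ψ, (c φ ψ).len = φ.len + ψ.len + 1)
    {M : ℕ} : ∀ {L : List Fml}, (∀ φ ∈ L, φ.len ≤ M) →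
      (bigConn c L).len ≤ 3 + L.length * (M + 1)
  | [], _ => by simp [bigConn, len]
  | [φ], h => by simpa [bigConn] using (h φ (by simp)).trans (by omega)
  | φ :: ψ :: l, h => by
    have hφ := h φ (by simp)
    have hl := len_bigConn_le hc (L := ψ :: l) fun χ hχ => h χ (List.mem_cons_of_mem _ hχ)
    simp only [bigConn, hc, List.length_cons] at hl ⊢
    nlinarith

theorem qstrings_bigConn_subset {c : Fml → Fml → Fml}
    (hc : ∀ φ ψ, (c φ ψ).qstrings = φ.qstrings ∪ ψ.qstrings) {S : Set (List Bool)}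
    {L : List Fml} (hL : L ≠ []) (h : ∀ φ ∈ L, φ.qstrings ⊆ S) :
    (bigConn c L).qstrings ⊆ S :=
  bigConn_induction (fun φ => φ.qstrings ⊆ S)
    (fun _ _ h₁ h₂ => (hc _ _).symm ▸ Set.union_subset h₁ h₂) (fun h => absurd h hL) h

open Classical in
noncomputable def lit (p : Prop) (φ : Fml) : Fml := if p then φ else .not φ

theorem eval_lit {W : Type} (r : W → W → Prop) (σ : ℕ → W) (p : Prop) (φ : Fml) :
    (lit p φ).eval r σ ↔ (p ↔ φ.eval r σ) := by
  unfold lit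
  split_ifs with hp <;> simp [eval, hp]

theorem len_lit_le (p : Prop) (φ : Fml) : (lit p φ).len ≤ φ.len + 1 := by
  unfold lit
  split_ifs <;> simp [len]

noncomputable def qpart : Bool → ℕ → Finset Fml → Fml
  | true, j, S => bigConn .and (S.toList.map (.ex j))
  | false, j, S => .all j (bigConn .or S.toList)

theorem eval_qpart_true {W : Type} (r : W → W → Prop) (σ : ℕ → W) (j : ℕ) (S : Finset Fml) :
    (qpart true j S).eval r σ ↔ ∀ χ ∈ S, ∃ w, χ.eval r (update σ j w) := by
  simp [qpart, eval_bigConn_and, eval]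

theorem eval_qpart_false {W : Type} (r : W → W → Prop) (σ : ℕ → W) (j : ℕ) {S : Finset Fml}
    (hS : S.Nonempty) :
    (qpart false j S).eval r σ ↔ ∀ w, ∃ χ ∈ S, χ.eval r (update σ j w) := by
  simp [qpart, eval, eval_bigConn_or _ _ hS.toList_ne_nil]

theorem len_qpart_le (b : Bool) (j : ℕ) {S : Finset Fml} {L : ℕ} (h : ∀ χ ∈ S, χ.len ≤ L) :
    (qpart b j S).len ≤ 5 + S.card * (L + 3) := by
  cases b
  · have := len_bigConn_le (c := .or) (fun _ _ => rfl) (L := S.toList) fun χ hχ =>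
      h χ (Finset.mem_toList.1 hχ)
    simp only [qpart, len, Finset.length_toList] at this ⊢
    nlinarith
  · have := len_bigConn_le (c := .and) (fun _ _ => rfl) (M := L + 2) (L := S.toList.map (.ex j))
      (by simpa [len] using h)
    simp only [qpart, Finset.length_toList, List.length_map] at this ⊢
    linarith [show L + 2 + 1 = L + 3 from rfl]

theorem qstrings_qpart_subset (b : Bool) (j : ℕ) {S : Finset Fml} (hS : S.Nonempty)
    {R : Set (List Bool)} (h : ∀ χ ∈ S, χ.qstrings ⊆ R) :
    (qpart b j S).qstrings ⊆ List.cons b '' R := by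
  cases b
  · exact Set.image_mono (qstrings_bigConn_subset (fun _ _ => rfl) hS.toList_ne_nil
      fun χ hχ => h χ (Finset.mem_toList.1 hχ))
  · refine qstrings_bigConn_subset (fun _ _ => rfl) (by simpa using hS.toList_ne_nil) ?_
    simp only [List.mem_map, Finset.mem_toList, forall_exists_index, and_imp]
    rintro _ χ hχ rfl
    exact Set.image_mono (h χ hχ)

/-! ### Normal formulas -/

/-- `NormalAt D j u`: `u` can occur in a normal sentence of quantifier rank `D` right below
the quantifiers over `x₀, …, x_{j-1}`. -/
inductive NormalAt (D : ℕ) : ℕ → Fml → Prop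
  | eq {a b : ℕ} : a < D → b < D → NormalAt D D (.eq a b)
  | rel {a b : ℕ} : a < D → b < D → NormalAt D D (.rel a b)
  | notEq {a b : ℕ} : a < D → b < D → NormalAt D D (.not (.eq a b))
  | notRel {a b : ℕ} : a < D → b < D → NormalAt D D (.not (.rel a b))
  | and {j : ℕ} {u v : Fml} : NormalAt D j u → NormalAt D j v → NormalAt D j (.and u v)
  | or {j : ℕ} {u v : Fml} : NormalAt D j u → NormalAt D j v → NormalAt D j (.or u v)
  | all {j : ℕ} {u : Fml} : j < D → NormalAt D (j + 1) u → NormalAt D j (.all j u)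
  | ex {j : ℕ} {u : Fml} : j < D → NormalAt D (j + 1) u → NormalAt D j (.ex j u)

namespace NormalAt

variable {D j : ℕ} {u : Fml}

theorem negAtomic (h : NormalAt D j u) : u.NegAtomic := by
  induction h <;> simp_all [NegAtomic, Fml.IsAtomic]

theorem vars_subset (h : NormalAt D j u) : u.vars ⊆ Finset.range D := by
  induction h <;> simp_all [vars, Finset.insert_subset_iff, Finset.union_subset_iff]

theorem freeVars_subset (h : NormalAt D j u) : u.freeVars ⊆ Finset.range j := by
  induction h with
  | eq ha hb | rel ha hb | notEq ha hb | notRel ha hb =>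
    simp [freeVars, Finset.insert_subset_iff, ha, hb]
  | and _ _ ih₁ ih₂ | or _ _ ih₁ ih₂ => exact Finset.union_subset ih₁ ih₂
  | all _ _ ih | ex _ _ ih =>
    intro i hi
    have := ih (Finset.mem_of_mem_erase hi)
    simp only [Finset.mem_range] at this ⊢
    have := Finset.ne_of_mem_erase hi
    omega

theorem depth_eq (h : NormalAt D j u) : u.depth = D - j := by
  induction h with
  | and _ _ ih₁ ih₂ | or _ _ ih₁ ih₂ => simp [depth, ih₁, ih₂]
  | all hj _ ih | ex hj _ ih => simp only [depth, ih]; omega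
  | _ => simp [depth]

theorem map_snd_of_mem_qvseqs (h : NormalAt D j u) :
    ∀ t ∈ u.qvseqs, t.map Prod.snd = List.range' j (D - j) := by
  induction h with
  | and _ _ ih₁ ih₂ | or _ _ ih₁ ih₂ => rintro t (ht | ht) <;> simp_all
  | @all j u hj _ ih | @ex j u hj _ ih =>
    rintro _ ⟨t, ht, rfl⟩
    rw [List.map_cons, ih t ht, show D - j = D - (j + 1) + 1 by omega, List.range'_succ]
  | _ => simp [qvseqs]

theorem length_of_mem_qstrings (h : NormalAt D j u) :
    ∀ t ∈ u.qstrings, t.length = D - j := by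
  induction h with
  | and _ _ ih₁ ih₂ | or _ _ ih₁ ih₂ => rintro t (ht | ht) <;> simp_all
  | @all j u hj _ ih | @ex j u hj _ ih =>
    rintro _ ⟨t, ht, rfl⟩
    rw [List.length_cons, ih t ht]
    omega
  | _ => simp [qstrings]

theorem qstrings_nonempty (h : NormalAt D j u) : u.qstrings.Nonempty := by
  induction h with
  | and _ _ ih | or _ _ ih => exact ih.mono Set.subset_union_left
  | all _ _ ih | ex _ _ ih => exact ih.image _
  | _ => exact ⟨[], rfl⟩

theorem normal (h : NormalAt D 0 u) : Normal 0 D u :=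
  ⟨h.negAtomic, Finset.subset_empty.1 h.freeVars_subset, h.vars_subset, h.depth_eq,
    h.map_snd_of_mem_qvseqs⟩

end NormalAt

theorem normalAt_of_qvseqs {D : ℕ} :
    ∀ (u : Fml) {j : ℕ}, u.NegAtomic → u.vars ⊆ Finset.range D →
      (∀ t ∈ u.qvseqs, t.map Prod.snd = List.range' j (D - j)) → j ≤ D → NormalAt D j u := by
  have leaf : ∀ {j}, List.range' j (D - j) = [] → j ≤ D → j = D := by
    intro j h hj
    have := List.range'_eq_nil_iff.1 h
    omega
  intro u
  induction u with
  | eq a b | rel a b =>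
    intro j _ hv hq hj
    simp only [vars, Finset.insert_subset_iff, Finset.singleton_subset_iff,
      Finset.mem_range] at hv
    obtain rfl := leaf (hq [] rfl).symm hj
    first | exact .eq hv.1 hv.2 | exact .rel hv.1 hv.2
  | not φ _ =>
    intro j hna hv hq hj
    cases φ <;> simp only [NegAtomic, Fml.IsAtomic] at hna
    all_goals
      simp only [vars, Finset.insert_subset_iff, Finset.singleton_subset_iff,
        Finset.mem_range] at hv
      obtain rfl := leaf (hq [] rfl).symm hj
    · exact .notEq hv.1 hv.2
    · exact .notRel hv.1 hv.2
  | and φ ψ ihφ ihψ | or φ ψ ihφ ihψ =>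
    intro j hna hv hq hj
    simp only [vars, Finset.union_subset_iff] at hv
    first
    | exact .and (ihφ hna.1 hv.1 (fun t ht => hq t (.inl ht)) hj)
        (ihψ hna.2 hv.2 (fun t ht => hq t (.inr ht)) hj)
    | exact .or (ihφ hna.1 hv.1 (fun t ht => hq t (.inl ht)) hj)
        (ihψ hna.2 hv.2 (fun t ht => hq t (.inr ht)) hj)
  | all i φ ih | ex i φ ih =>
    intro j hna hv hq hj
    simp only [vars, Finset.insert_subset_iff, Finset.mem_range] at hv
    obtain ⟨t₀, ht₀⟩ := φ.qvseqs_nonempty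
    obtain ⟨rfl, -, -⟩ := List.range'_eq_cons_iff.1 (hq _ ⟨t₀, ht₀, rfl⟩).symm
    have hq' : ∀ t ∈ φ.qvseqs, t.map Prod.snd = List.range' (j + 1) (D - (j + 1)) :=
      fun t ht => by
        simpa [Nat.sub_sub] using (List.range'_eq_cons_iff.1 (hq _ ⟨t, ht, rfl⟩).symm).2.2
    first
    | exact .all hv.1 (ih hna hv.2 hq' hv.1)
    | exact .ex hv.1 (ih hna hv.2 hq' hv.1)

theorem Normal.normalAt {D : ℕ} {A : Fml} (h : Normal 0 D A) : NormalAt D 0 A :=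
  normalAt_of_qvseqs A h.1 h.2.2.1 h.2.2.2.2 (Nat.zero_le D)

theorem NormalAt.bigConn {D j : ℕ} {c : Fml → Fml → Fml}
    (hc : ∀ u v, NormalAt D j u → NormalAt D j v → NormalAt D j (c u v)) {L : List Fml}
    (hL : L ≠ []) (h : ∀ u ∈ L, NormalAt D j u) : NormalAt D j (PaperFO.bigConn c L) :=
  bigConn_induction _ hc (fun h => absurd h hL) h

theorem NormalAt.qpart {D j : ℕ} (b : Bool) (hj : j < D) {S : Finset Fml} (hS : S.Nonempty)
    (h : ∀ u ∈ S, NormalAt D (j + 1) u) : NormalAt D j (PaperFO.qpart b j S) := by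
  cases b
  · exact .all hj (.bigConn (fun _ _ => .or) hS.toList_ne_nil fun u hu =>
      h u (Finset.mem_toList.1 hu))
  · refine .bigConn (fun _ _ => .and) (by simpa using hS.toList_ne_nil) ?_
    simp only [List.mem_map, Finset.mem_toList, forall_exists_index, and_imp]
    rintro _ u hu rfl
    exact .ex hj (h u hu)

/-! ### Descriptions -/

noncomputable def atomConj (D : ℕ) (e g : Fin D → Fin D → Prop) : Fml :=
  bigConn .and ((List.finRange D ×ˢ List.finRange D).map fun p =>
    .and (lit (e p.1 p.2) (.eq p.1 p.2)) (lit (g p.1 p.2) (.rel p.1 p.2)))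

section AtomConj

variable (D : ℕ) (e g : Fin D → Fin D → Prop)

theorem eval_atomConj {W : Type} (r : W → W → Prop) (σ : ℕ → W) :
    (atomConj D e g).eval r σ ↔
      ∀ a b : Fin D, (e a b ↔ σ a = σ b) ∧ (g a b ↔ r (σ a) (σ b)) := by
  simp only [atomConj, eval_bigConn_and, List.forall_mem_map, List.mem_product,
    List.mem_finRange, and_self, true_implies, Prod.forall, eval, eval_lit]

theorem normalAt_atomConj (hD : 0 < D) : NormalAt D D (atomConj D e g) := by
  refine bigConn_induction _ (fun _ _ => .and) (fun _ => .eq hD hD) ?_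
  simp only [List.mem_map, forall_exists_index, and_imp]
  rintro _ ⟨a, b⟩ - rfl
  refine .and ?_ ?_ <;> unfold lit <;> split_ifs
  exacts [.eq a.2 b.2, .notEq a.2 b.2, .rel a.2 b.2, .notRel a.2 b.2]

theorem qstrings_atomConj : (atomConj D e g).qstrings ⊆ {[]} := by
  refine bigConn_induction (c := .and) (fun φ => φ.qstrings ⊆ {[]})
    (fun _ _ h₁ h₂ => Set.union_subset h₁ h₂) (fun _ => le_rfl) ?_
  simp only [List.mem_map, forall_exists_index, and_imp]
  rintro _ ⟨a, b⟩ - rfl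
  refine Set.union_subset ?_ ?_ <;> unfold lit <;> split_ifs <;> exact le_rfl

theorem len_atomConj_le : (atomConj D e g).len ≤ 10 * (D * D) + 3 := by
  have := len_bigConn_le (c := .and) (fun _ _ => rfl) (M := 9)
    (L := (List.finRange D ×ˢ List.finRange D).map fun p =>
      .and (lit (e p.1 p.2) (.eq p.1 p.2)) (lit (g p.1 p.2) (.rel p.1 p.2))) (by
    simp only [List.mem_map, forall_exists_index, and_imp]
    rintro _ p - rfl
    have h₁ := len_lit_le (e p.1 p.2) (.eq p.1 p.2)
    have h₂ := len_lit_le (g p.1 p.2) (.rel p.1 p.2)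
    simp only [len] at h₁ h₂ ⊢
    omega)
  simp only [List.length_map, List.length_product, List.length_finRange] at this
  rw [atomConj]
  omega

end AtomConj

theorem exists_comp_eq_iff_eq {α β : Type*} (s : α → β) :
    ∃ f : α → α, ∀ a b, f a = f b ↔ s a = s b := by
  rcases isEmpty_or_nonempty α with hα | hα
  · exact ⟨id, fun a => isEmptyElim a⟩
  · refine ⟨Function.invFun s ∘ s, fun a b => ⟨fun h => ?_, fun h => by simp [h]⟩⟩
    rw [← Function.invFun_eq (f := s) ⟨a, rfl⟩, ← Function.invFun_eq (f := s) ⟨b, rfl⟩]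
    exact congrArg s h

noncomputable def atomDesc {V : Type} (r : V → V → Prop) (D : ℕ) (σ : ℕ → V) : Fml :=
  atomConj D (fun a b => σ a = σ b) (fun a b => r (σ a) (σ b))

/-- An atomic type is determined by the partition of `{0, …, D-1}` it induces, recorded by
a choice of representatives, and by the arc relation. -/
theorem exists_finset_atomDesc {V : Type} (r : V → V → Prop) (D : ℕ) :
    ∃ T : Finset Fml, T.card ≤ D ^ D * 2 ^ (D * D) ∧ ∀ σ, atomDesc r D σ ∈ T := by
  classical
  refine ⟨Finset.univ.image fun fg : (Fin D → Fin D) × (Fin D → Fin D → Prop) =>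
    atomConj D (fun a b => fg.1 a = fg.1 b) fg.2, ?_, fun σ => ?_⟩
  · refine Finset.card_image_le.trans_eq ?_
    simp [Fintype.card_prop, ← pow_mul]
  · obtain ⟨f, hf⟩ := exists_comp_eq_iff_eq fun a : Fin D => σ a
    refine Finset.mem_image.2 ⟨(f, fun a b => r (σ a) (σ b)), Finset.mem_univ _, ?_⟩
    simp only [atomDesc, hf]

def residual (q : Set (List Bool)) (b : Bool) : Set (List Bool) := {t | b :: t ∈ q}

open Classical in
noncomputable def branches (q : Set (List Bool)) : List Bool :=
  [true, false].filter fun b => (residual q b).Nonempty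

theorem mem_branches {q : Set (List Bool)} {b : Bool} :
    b ∈ branches q ↔ (residual q b).Nonempty := by
  cases b <;> simp [branches]

def IsQPattern (m : ℕ) (q : Set (List Bool)) : Prop := q.Nonempty ∧ ∀ t ∈ q, t.length = m

namespace IsQPattern

variable {m : ℕ} {q : Set (List Bool)}

theorem nil_mem (h : IsQPattern 0 q) : [] ∈ q := by
  obtain ⟨t, ht⟩ := h.1
  rwa [List.eq_nil_of_length_eq_zero (h.2 t ht)] at ht

theorem residual (h : IsQPattern (m + 1) q) {b : Bool} (hb : b ∈ branches q) :
    IsQPattern m (PaperFO.residual q b) :=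
  ⟨mem_branches.1 hb, fun _ ht => Nat.succ_injective (h.2 _ ht)⟩

theorem branches_ne_nil (h : IsQPattern (m + 1) q) : branches q ≠ [] := by
  obtain ⟨t, ht⟩ := h.1
  cases t with
  | nil => exact absurd (h.2 _ ht) (by simp)
  | cons b t => exact List.ne_nil_of_mem (mem_branches.2 ⟨t, ht⟩)

end IsQPattern

theorem NormalAt.isQPattern {D j : ℕ} {u : Fml} (h : NormalAt D j u) :
    IsQPattern (D - j) u.qstrings :=
  ⟨h.qstrings_nonempty, h.length_of_mem_qstrings⟩

section Desc

variable {V : Type} [Fintype V] (r : V → V → Prop)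

open Classical in
/-- The Hintikka formula of `(V, r, σ)` for `m` more quantifiers over `xⱼ, xⱼ₊₁, …`, pruned to
the quantifier strings in `q`. -/
noncomputable def desc : ℕ → ℕ → Set (List Bool) → (ℕ → V) → Fml
  | 0, j, _, σ => atomDesc r j σ
  | m + 1, j, q, σ => bigConn .and ((branches q).map fun b =>
      qpart b j (Finset.univ.image fun v => desc m (j + 1) (residual q b) (update σ j v)))

open scoped Classical

theorem eval_desc_self [Nonempty V] :
    ∀ (m j : ℕ) (q : Set (List Bool)) (σ : ℕ → V), (desc r m j q σ).eval r σ
  | 0, j, q, σ => (eval_atomConj _ _ _ r σ).2 fun _ _ => ⟨Iff.rfl, Iff.rfl⟩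
  | m + 1, j, q, σ => by
    simp only [desc, eval_bigConn_and, List.forall_mem_map]
    rintro (_ | _) -
    · rw [eval_qpart_false _ _ _ (Finset.univ_nonempty.image _)]
      exact fun v => ⟨_, Finset.mem_image_of_mem _ (Finset.mem_univ v), eval_desc_self _ _ _ _⟩
    · rw [eval_qpart_true]
      simp only [Finset.mem_image, Finset.mem_univ, true_and, forall_exists_index,
        forall_apply_eq_imp_iff]
      exact fun v => ⟨v, eval_desc_self _ _ _ _⟩

theorem normalAt_desc [Nonempty V] {D : ℕ} (hD : 0 < D) :
    ∀ (m j : ℕ) (q : Set (List Bool)) (σ : ℕ → V), j + m = D → IsQPattern m q →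
      NormalAt D j (desc r m j q σ)
  | 0, j, q, σ, hjm, _ => by
    obtain rfl : j = D := hjm
    rw [desc, atomDesc]
    exact normalAt_atomConj _ _ _ hD
  | m + 1, j, q, σ, hjm, hq => by
    refine .bigConn (fun _ _ => .and) (by simpa using hq.branches_ne_nil) ?_
    simp only [List.mem_map]
    rintro _ ⟨b, hb, rfl⟩
    refine .qpart b (by omega) (Finset.univ_nonempty.image _) ?_
    simp only [Finset.mem_image, Finset.mem_univ, true_and]
    rintro _ ⟨v, rfl⟩
    exact normalAt_desc hD m (j + 1) _ _ (by omega) (hq.residual hb)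

theorem qstrings_desc_subset [Nonempty V] :
    ∀ (m j : ℕ) {q : Set (List Bool)} (σ : ℕ → V), IsQPattern m q → (desc r m j q σ).qstrings ⊆ q
  | 0, _, _, _, hq => by
    rw [desc, atomDesc]
    exact (qstrings_atomConj _ _ _).trans (Set.singleton_subset_iff.2 hq.nil_mem)
  | m + 1, j, q, σ, hq => by
    refine qstrings_bigConn_subset (fun _ _ => rfl) (by simpa using hq.branches_ne_nil) ?_
    simp only [List.mem_map]
    rintro _ ⟨b, hb, rfl⟩
    refine (qstrings_qpart_subset b j (Finset.univ_nonempty.image _) ?_).trans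
      (Set.image_subset_iff.2 fun t ht => ht)
    simp only [Finset.mem_image, Finset.mem_univ, true_and]
    rintro _ ⟨v, rfl⟩
    exact qstrings_desc_subset m (j + 1) _ (hq.residual hb)

theorem NormalAt.eval_of_eval_desc [Nonempty V] {D j : ℕ} {u : Fml} (hu : NormalAt D j u)
    {W : Type} {r' : W → W → Prop} :
    ∀ {m : ℕ} {q : Set (List Bool)} {σ : ℕ → V} {σ' : ℕ → W}, j + m = D → u.qstrings ⊆ q →
      (desc r m j q σ).eval r' σ' → u.eval r σ → u.eval r' σ' := by
  induction hu with
  | eq ha hb | rel ha hb | notEq ha hb | notRel ha hb =>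
    intro m q σ σ' hjm _ hW hV
    obtain rfl : m = 0 := by omega
    rw [desc, atomDesc, eval_atomConj] at hW
    have := hW ⟨_, ha⟩ ⟨_, hb⟩
    simp_all [eval]
  | and _ _ ih₁ ih₂ =>
    intro m q σ σ' hjm hq hW hV
    exact ⟨ih₁ hjm (fun t ht => hq (.inl ht)) hW hV.1, ih₂ hjm (fun t ht => hq (.inr ht)) hW hV.2⟩
  | or _ _ ih₁ ih₂ =>
    intro m q σ σ' hjm hq hW hV
    exact hV.imp (ih₁ hjm (fun t ht => hq (.inl ht)) hW) (ih₂ hjm (fun t ht => hq (.inr ht)) hW)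
  | @all j u hj hu ih | @ex j u hj hu ih =>
    intro m q σ σ' hjm hq hW hV
    obtain ⟨m, rfl⟩ : ∃ m', m = m' + 1 := ⟨m - 1, by omega⟩
    have hq' : u.qstrings ⊆ residual q _ := fun t ht => hq ⟨t, ht, rfl⟩
    simp only [desc, eval_bigConn_and, List.forall_mem_map] at hW
    have hW := hW _ (mem_branches.2 (hu.qstrings_nonempty.mono hq'))
    first
    | rw [eval_qpart_false _ _ _ (Finset.univ_nonempty.image _)] at hW
      intro w
      obtain ⟨_, hχ, hχW⟩ := hW w
      obtain ⟨v, -, rfl⟩ := Finset.mem_image.1 hχ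
      exact ih (by omega) hq' hχW (hV v)
    | rw [eval_qpart_true] at hW
      obtain ⟨v, hv⟩ := hV
      obtain ⟨w, hw⟩ := hW _ (Finset.mem_image_of_mem _ (Finset.mem_univ v))
      exact ⟨w, ih (by omega) hq' hw hv⟩

/-! ### Counting descriptions -/

/-- A bound on the number of descriptions `m` levels above the atomic types of `D` variables. -/
def descCount (D : ℕ) : ℕ → ℕ
  | 0 => D ^ D * 2 ^ (D * D)
  | m + 1 => 2 ^ (2 * descCount D m)

/-- A bound on the length of descriptions `m` levels above the atomic types of `D` variables. -/
def descLen (D : ℕ) : ℕ → ℕ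
  | 0 => 10 * (D * D) + 3
  | m + 1 => 2 * descCount D m * (descLen D m + 3) + 15

/-- A description is determined by the two sets of descriptions one level further, one for
each quantifier. -/
theorem exists_finset_desc {D : ℕ} :
    ∀ (m j : ℕ) (q : Set (List Bool)), j + m = D →
      ∃ T : Finset Fml, T.card ≤ descCount D m ∧ ∀ σ : ℕ → V, desc r m j q σ ∈ T
  | 0, j, q, hjm => by
    obtain rfl : j = D := hjm
    exact exists_finset_atomDesc r j
  | m + 1, j, q, hjm => by
    choose T hTcard hT using fun b =>
      exists_finset_desc (D := D) m (j + 1) (residual q b) (by omega)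
    refine ⟨(Fintype.piFinset fun b => (T b).powerset).image fun S =>
      bigConn .and ((branches q).map fun b => qpart b j (S b)), ?_, fun σ => ?_⟩
    · calc _ ≤ (Fintype.piFinset fun b => (T b).powerset).card := Finset.card_image_le
        _ = 2 ^ (T true).card * 2 ^ (T false).card := by
          simp [Fintype.card_piFinset, Finset.card_powerset]
        _ ≤ 2 ^ descCount D m * 2 ^ descCount D m := by
          gcongr <;> [exact one_le_two; exact hTcard _; exact one_le_two; exact hTcard _]
        _ = descCount D (m + 1) := by rw [descCount, ← pow_add, two_mul]
    · refine Finset.mem_image.2 ⟨_, Fintype.mem_piFinset.2 fun b => ?_, rfl⟩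
      simp only [Finset.mem_powerset, Finset.image_subset_iff]
      exact fun v _ => hT b _

theorem len_desc_le {D : ℕ} :
    ∀ (m j : ℕ) (q : Set (List Bool)) (σ : ℕ → V), j + m = D → (desc r m j q σ).len ≤ descLen D m
  | 0, j, q, σ, hjm => by
    obtain rfl : j = D := hjm
    rw [desc, atomDesc, descLen]
    exact len_atomConj_le _ _ _
  | m + 1, j, q, σ, hjm => by
    set N := descCount D m
    set L := descLen D m
    have hpart : ∀ b, (qpart b j (Finset.univ.image fun v =>
        desc r m (j + 1) (residual q b) (update σ j v))).len ≤ 5 + N * (L + 3) := by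
      intro b
      obtain ⟨T, hTcard, hT⟩ := exists_finset_desc r (D := D) m (j + 1) (residual q b) (by omega)
      have hcard : (Finset.univ.image fun v =>
          desc r m (j + 1) (residual q b) (update σ j v)).card ≤ N :=
        (Finset.card_le_card (Finset.image_subset_iff.2 fun v _ => hT _)).trans hTcard
      refine (len_qpart_le b j ?_).trans (by gcongr)
      simp only [Finset.mem_image, Finset.mem_univ, true_and]
      rintro _ ⟨v, rfl⟩
      exact len_desc_le (D := D) m (j + 1) _ _ (by omega)
    have := len_bigConn_le (c := .and) (fun _ _ => rfl) (M := 5 + N * (L + 3))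
      (L := (branches q).map fun b => qpart b j (Finset.univ.image fun v =>
        desc r m (j + 1) (residual q b) (update σ j v)))
      (List.forall_mem_map.2 fun b _ => hpart b)
    have hbr : (branches q).length ≤ 2 := List.length_filter_le _ _
    rw [List.length_map] at this
    calc (desc r (m + 1) j q σ).len ≤ 3 + 2 * (5 + N * (L + 3) + 1) := this.trans (by gcongr)
      _ = descLen D (m + 1) := by rw [descLen]; ring

end Desc

/-! ### The tower bound -/

def expIter (a x : ℕ) : ℕ := (2 ^ ·)^[a] x

theorem expIter_succ (a x : ℕ) : expIter (a + 1) x = 2 ^ expIter a x :=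
  Function.iterate_succ_apply' _ a x

theorem expIter_strictMono (a : ℕ) : StrictMono (expIter a) :=
  (pow_right_strictMono₀ one_lt_two).iterate a

theorem tower_add (b : ℕ) : ∀ a, tower (b + a) = expIter a (tower b)
  | 0 => rfl
  | a + 1 => by rw [expIter_succ, ← tower_add b a]; rfl

theorem tower_strictMono : StrictMono tower :=
  strictMono_nat_of_lt_succ fun _ => Nat.lt_two_pow_self

theorem two_mul_expIter_le {x : ℕ} (hx : 1 ≤ x) : ∀ a, 2 * expIter a x ≤ expIter a (2 * x)
  | 0 => le_rfl
  | a + 1 => by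
    have h₁ : 1 ≤ expIter a x := hx.trans ((expIter_strictMono a).id_le x)
    rw [expIter_succ, expIter_succ, ← pow_succ']
    exact Nat.pow_le_pow_right two_pos ((by omega : expIter a x + 1 ≤ 2 * expIter a x).trans
      (two_mul_expIter_le hx a))

theorem sq_expIter_succ_le {x : ℕ} (hx : 1 ≤ x) (a : ℕ) :
    expIter (a + 1) x ^ 2 ≤ expIter (a + 1) (2 * x) := by
  rw [expIter_succ, expIter_succ, ← pow_mul, mul_comm]
  exact Nat.pow_le_pow_right two_pos (two_mul_expIter_le hx a)

theorem lt_tower_logStar (n : ℕ) : n < tower (logStar n + 1) := by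
  induction n using Nat.strong_induction_on with
  | _ n ih =>
    rw [logStar]
    split_ifs with h
    · change n < 2
      omega
    · have := ih _ (Nat.log_lt_self 2 (by omega))
      calc n < 2 ^ (Nat.log 2 n + 1) := Nat.lt_pow_succ_log_self one_lt_two n
        _ ≤ 2 ^ tower (logStar (Nat.log 2 n) + 1) := Nat.pow_le_pow_right two_pos this

/-- Chosen so that `descSize D (m + 1) ≤ 2 ^ descSize D m`. -/
def descSize (D m : ℕ) : ℕ := 2 * descCount D m + descLen D m + 16

theorem descSize_succ_le (D m : ℕ) : descSize D (m + 1) ≤ 2 ^ descSize D m := by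
  set N := descCount D m
  set L := descLen D m
  have hX : 2 * N < 2 ^ (2 * N) := Nat.lt_two_pow_self
  have hY : 64 * (L + 1) ≤ 2 ^ (L + 6) := by
    rw [pow_add]
    nlinarith [Nat.lt_two_pow_self (n := L)]
  have hpow : 2 ^ descSize D m = 2 ^ (2 * N) * 2 ^ (L + 6) * 2 ^ 10 := by
    rw [← pow_add, ← pow_add]; rfl
  rw [hpow]
  simp only [descSize, descCount, descLen]
  nlinarith

theorem descSize_le_expIter (D : ℕ) : ∀ m, descSize D m ≤ expIter m (descSize D 0)
  | 0 => le_rfl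
  | m + 1 => (descSize_succ_le D m).trans <| by
    rw [expIter_succ]
    exact Nat.pow_le_pow_right two_pos (descSize_le_expIter D m)

theorem descLen_succ_le_sq (D m : ℕ) : descLen D (m + 1) ≤ descSize D m ^ 2 := by
  simp only [descLen, descSize]
  nlinarith

theorem two_mul_sq_add_three_lt {n : ℕ} (hn : 5 ≤ n) : 2 * n ^ 2 + 3 < 2 ^ (n + 1) := by
  induction n, hn using Nat.le_induction with
  | base => norm_num
  | succ n hn ih =>
    rw [pow_succ 2 (n + 1)]
    nlinarith

theorem two_mul_descSize_zero_lt {D : ℕ} (hD : 2 ≤ D) :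
    2 * descSize D 0 < tower (logStar D + 3) := by
  set s := logStar D
  have hDs : D < tower (s + 1) := lt_tower_logStar D
  have hbig : 2 ^ 2 ^ (D + 1) ≤ tower (s + 3) :=
    Nat.pow_le_pow_right two_pos (Nat.pow_le_pow_right two_pos hDs)
  rcases le_or_gt D 4 with hD4 | hD4
  · -- `D = 2` needs the room given by `logStar 2 = 1`
    have hs : tower 4 ≤ tower (s + 3) := tower_strictMono.monotone <| by
      have := tower_strictMono.lt_iff_lt.1 ((show tower 1 = 2 from rfl) ▸ hD |>.trans_lt hDs)
      omega
    interval_cases D <;> simp [descSize, descCount, descLen, tower] at hbig hs ⊢ <;> omega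
  · have hDD : D ^ D ≤ 2 ^ (D * D) := by
      rw [pow_mul]
      exact Nat.pow_le_pow_left Nat.lt_two_pow_self.le D
    have hsq : 64 ≤ 2 ^ (D * D) := (Nat.pow_le_pow_right two_pos (by nlinarith :
      6 ≤ D * D)).trans' (by norm_num)
    have hlin : D * D < 2 ^ (D * D) := Nat.lt_two_pow_self
    calc 2 * descSize D 0 ≤ 2 ^ (D * D) * 2 ^ (D * D) * 2 ^ 3 := by
          simp only [descSize, descCount, descLen]
          nlinarith
      _ = 2 ^ (2 * D ^ 2 + 3) := by rw [← pow_add, ← pow_add]; ring_nf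
      _ < 2 ^ 2 ^ (D + 1) := Nat.pow_lt_pow_right one_lt_two (two_mul_sq_add_three_lt hD4)
      _ ≤ tower (s + 3) := hbig

theorem descLen_lt_tower {D : ℕ} (hD : 2 ≤ D) : descLen D D < tower (D + logStar D + 2) := by
  obtain ⟨a, rfl⟩ : ∃ a, D = a + 2 := ⟨D - 2, by omega⟩
  have hpos : 1 ≤ descSize (a + 2) 0 := by simp [descSize]
  calc descLen (a + 2) (a + 2) ≤ descSize (a + 2) (a + 1) ^ 2 := descLen_succ_le_sq _ _
    _ ≤ expIter (a + 1) (descSize (a + 2) 0) ^ 2 :=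
      Nat.pow_le_pow_left (descSize_le_expIter _ _) 2
    _ ≤ expIter (a + 1) (2 * descSize (a + 2) 0) := sq_expIter_succ_le hpos a
    _ < expIter (a + 1) (tower (logStar (a + 2) + 3)) :=
      expIter_strictMono _ (two_mul_descSize_zero_lt hD)
    _ = tower (a + 2 + logStar (a + 2) + 2) := by
      rw [← tower_add]
      congr 1
      omega

theorem DDefines.of_fmlEquiv {V : Type} [Fintype V] [Nonempty V] {r : V → V → Prop}
    {φ ψ : Fml} (hφ : DDefines r φ) (h : FmlEquiv φ ψ) (hψ : ψ.IsSentence) : DDefines r ψ :=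
  ⟨hψ, fun σ => (h V inferInstance inferInstance r σ).1 (hφ.2.1 σ),
    fun W hW hW' r' hiso hr' => hφ.2.2 W hW hW' r' hiso fun σ => (h W hW hW' r' σ).2 (hr' σ)⟩

theorem defines_desc {V : Type} [Fintype V] [Nonempty V] {r : V → V → Prop} {D : ℕ}
    (hD : 0 < D) {A : Fml} (hA : NormalAt D 0 A) (hdef : DDefines r A) (σ : ℕ → V) :
    DDefines r (desc r D 0 A.qstrings σ) := by
  have hsent : (desc r D 0 A.qstrings σ).IsSentence := Finset.subset_empty.1
    (normalAt_desc r hD D 0 _ σ (zero_add D) hA.isQPattern).freeVars_subset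
  refine ⟨hsent, fun σ' => (eval_of_isSentence hsent σ σ').1 (eval_desc_self r D 0 _ σ), ?_⟩
  exact fun W hW₁ hW₂ r' hiso hW => hdef.2.2 W hW₁ hW₂ r' hiso fun σ' =>
    hA.eval_of_eval_desc r (zero_add D) subset_rfl (hW σ') (hdef.2.1 σ)

theorem exists_mem_defines_len_le {F : Set Fml} (hreg : Regular F) {V : Type} [Fintype V]
    [Nonempty V] {r : V → V → Prop} {ψ : Fml} (hψF : ψ ∈ F) (hψ : DDefines r ψ) :
    ∃ B ∈ F, DDefines r B ∧ B.len ≤ descLen ψ.depth ψ.depth := by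
  have hD : 0 < ψ.depth := two_pos.trans_le (two_le_depth_of_defines hψ)
  obtain ⟨A, hAF, hA, -, hψA⟩ := hreg.2.2.1 ψ hψF 0 (by rw [Finset.range_zero]; exact hψ.1)
  rw [zero_add] at hA
  have hAdef := hψ.of_fmlEquiv hψA (by simpa [IsSentence] using hA.2.1)
  have hAn := hA.normalAt
  obtain ⟨P, -, hP⟩ := hreg.2.2.2 ψ.depth hD
  let σ : ℕ → V := fun _ => Classical.arbitrary V
  have hB := normalAt_desc r hD ψ.depth 0 A.qstrings σ (zero_add _) hAn.isQPattern
  refine ⟨_, (hP _ hB.normal).2 ?_, defines_desc hD hAn hAdef σ,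
    len_desc_le r _ 0 _ σ (zero_add _)⟩
  exact (qstrings_desc_subset r _ 0 σ hAn.isQPattern).trans ((hP A hA).1 hAF)

theorem statement_15 (F : Set Fml) (hreg : Regular F)
    {V : Type} [Fintype V] [Nonempty V] (r : V → V → Prop)
    (hdef : ∃ φ ∈ F, DDefines r φ) :
    sInf {n : ℕ | ∃ φ ∈ F, DDefines r φ ∧ φ.len = n} <
      tower (sInf {n : ℕ | ∃ φ ∈ F, DDefines r φ ∧ φ.depth = n} +
        logStar (sInf {n : ℕ | ∃ φ ∈ F, DDefines r φ ∧ φ.depth = n}) + 2) := by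
  obtain ⟨φ, hφF, hφ⟩ := hdef
  obtain ⟨ψ, hψF, hψ, hψD⟩ : ∃ ψ ∈ F, DDefines r ψ ∧
      ψ.depth = sInf {n : ℕ | ∃ φ ∈ F, DDefines r φ ∧ φ.depth = n} :=
    Nat.sInf_mem (s := {n : ℕ | ∃ φ ∈ F, DDefines r φ ∧ φ.depth = n}) ⟨φ.depth, φ, hφF, hφ, rfl⟩
  obtain ⟨B, hBF, hB, hBlen⟩ := exists_mem_defines_len_le hreg hψF hψ
  refine (Nat.sInf_le (s := {n : ℕ | ∃ φ ∈ F, DDefines r φ ∧ φ.len = n})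
    ⟨B, hBF, hB, rfl⟩).trans_lt ?_
  rw [← hψD]
  exact hBlen.trans_lt (descLen_lt_tower (two_le_depth_of_defines hψ))

end PaperFO
end

section
/- For every integer n ≥ 1, the minimum quantifier depth of a first-order sentence defining the complete graph K_n equals n + 1, and the minimum quantifier depth of a 0-alternating sentence defining K_n also equals n + 1; that is, D(K_n) = D_0(K_n) = n + 1. -/
namespace PaperFO

/-- A sentence is true on the graph `G` (graphs interpret `Fml.rel` as the
adjacency relation `~`). -/
def GModels {V : Type} (G : SimpleGraph V) (φ : Fml) : Prop :=
  ∀ σ : ℕ → V, φ.eval G.Adj σ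

/-- The sentence `φ` defines the graph `G`: it is a sentence, it is true on
`G`, and it fails on every (finite, nonempty) graph not isomorphic to `G`. -/
def Defines {V : Type} (G : SimpleGraph V) (φ : Fml) : Prop :=
  φ.IsSentence ∧ GModels G φ ∧
    ∀ (W : Type) (_ : Fintype W) (_ : Nonempty W) (H : SimpleGraph W),
      ¬ Nonempty (G ≃g H) → ¬ GModels H φ

end PaperFO

namespace PaperFO
namespace Fml

/-! ### Generic lemmas -/

lemma eval_congr_s19 {V : Type} {r r' : V → V → Prop} (h : ∀ a b, r a b ↔ r' a b) :
    ∀ (φ : Fml) (σ : ℕ → V), φ.eval r σ ↔ φ.eval r' σ := by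
  intro φ
  induction φ with
  | eq i j => intro σ; rfl
  | rel i j => intro σ; exact h _ _
  | not φ ih => intro σ; simp [eval, ih]
  | and φ ψ ihφ ihψ => intro σ; simp [eval, ihφ, ihψ]
  | or φ ψ ihφ ihψ => intro σ; simp [eval, ihφ, ihψ]
  | all i φ ih => intro σ; simp only [eval]; exact forall_congr' fun v => ih _
  | ex i φ ih => intro σ; simp only [eval]; exact exists_congr fun v => ih _

lemma card_image_mono {V : Type} [DecidableEq V] {s t : Finset ℕ} (h : s ⊆ t) (σ : ℕ → V) :
    (s.image σ).card ≤ (t.image σ).card :=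
  Finset.card_le_card (Finset.image_subset_image h)

lemma card_image_update_le {V : Type} [DecidableEq V] (s : Finset ℕ) (i : ℕ) (σ : ℕ → V)
    (v : V) :
    (s.image (Function.update σ i v)).card ≤ ((s.erase i).image σ).card + 1 := by
  have hsub : s.image (Function.update σ i v) ⊆ insert v ((s.erase i).image σ) := by
    intro x hx
    simp only [Finset.mem_image] at hx
    obtain ⟨j, hj, rfl⟩ := hx
    by_cases hji : j = i
    · subst hji; simp [Function.update_self]
    · rw [Function.update_of_ne hji]
      exact Finset.mem_insert_of_mem (Finset.mem_image_of_mem _ (Finset.mem_erase.mpr ⟨hji, hj⟩))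
  calc (s.image (Function.update σ i v)).card ≤ _ := Finset.card_le_card hsub
    _ ≤ _ := Finset.card_insert_le _ _

/-- Duplicator's matching step. -/
lemma match_step {V W : Type} [Fintype W] [DecidableEq V] [DecidableEq W]
    (s : Finset ℕ) (i : ℕ) (σ : ℕ → V) (τ : ℕ → W)
    (h : ∀ j ∈ s.erase i, ∀ k ∈ s.erase i, (σ j = σ k ↔ τ j = τ k))
    (hcard : ((s.erase i).image τ).card < Fintype.card W) (v : V) :
    ∃ w : W, ∀ j ∈ s, ∀ k ∈ s,
      (Function.update σ i v j = Function.update σ i v k ↔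
        Function.update τ i w j = Function.update τ i w k) := by
  by_cases hv : ∃ j ∈ s.erase i, σ j = v
  · obtain ⟨j₀, hj₀, hvj₀⟩ := hv
    refine ⟨τ j₀, ?_⟩
    intro j hj k hk
    simp only [Function.update_apply]
    by_cases hji : j = i <;> by_cases hki : k = i
    · simp [hji, hki]
    · rw [if_pos hji, if_pos hji, if_neg hki, if_neg hki, ← hvj₀]
      exact h j₀ hj₀ k (Finset.mem_erase.mpr ⟨hki, hk⟩)
    · rw [if_neg hji, if_neg hji, if_pos hki, if_pos hki, ← hvj₀]
      exact h j (Finset.mem_erase.mpr ⟨hji, hj⟩) j₀ hj₀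
    · rw [if_neg hji, if_neg hki, if_neg hji, if_neg hki]
      exact h j (Finset.mem_erase.mpr ⟨hji, hj⟩) k (Finset.mem_erase.mpr ⟨hki, hk⟩)
  · push_neg at hv
    have hne : (((s.erase i).image τ)ᶜ : Finset W).Nonempty := by
      rw [← Finset.card_pos, Finset.card_compl]
      omega
    obtain ⟨w, hw⟩ := hne
    rw [Finset.mem_compl] at hw
    refine ⟨w, ?_⟩
    intro j hj k hk
    simp only [Function.update_apply]
    by_cases hji : j = i <;> by_cases hki : k = i
    · simp [hji, hki]
    · rw [if_pos hji, if_pos hji, if_neg hki, if_neg hki]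
      have hk' : k ∈ s.erase i := Finset.mem_erase.mpr ⟨hki, hk⟩
      constructor
      · intro hvk; exact absurd hvk.symm (hv k hk')
      · intro hwk; exact absurd (Finset.mem_image_of_mem τ hk') (hwk ▸ hw)
    · rw [if_neg hji, if_neg hji, if_pos hki, if_pos hki]
      have hj' : j ∈ s.erase i := Finset.mem_erase.mpr ⟨hji, hj⟩
      constructor
      · intro hvj; exact absurd hvj (hv j hj')
      · intro hwj; exact absurd (Finset.mem_image_of_mem τ hj') (hwj.symm ▸ hw)
    · rw [if_neg hji, if_neg hki, if_neg hji, if_neg hki]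
      exact h j (Finset.mem_erase.mpr ⟨hji, hj⟩) k (Finset.mem_erase.mpr ⟨hki, hk⟩)

/-- Ehrenfeucht–Fraïssé-style transfer between complete graphs. -/
lemma ef : ∀ (φ : Fml) {V W : Type} [Fintype V] [Fintype W] [DecidableEq V] [DecidableEq W]
    (σ : ℕ → V) (τ : ℕ → W),
    (∀ i ∈ φ.freeVars, ∀ j ∈ φ.freeVars, (σ i = σ j ↔ τ i = τ j)) →
    (φ.freeVars.image σ).card + φ.depth ≤ Fintype.card V →
    (φ.freeVars.image τ).card + φ.depth ≤ Fintype.card W →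
    (φ.eval (fun a b => a ≠ b) σ ↔ φ.eval (fun a b => a ≠ b) τ) := by
  intro φ
  induction φ with
  | eq i j =>
    intro V W _ _ _ _ σ τ h _ _
    exact h i (by simp [freeVars]) j (by simp [freeVars])
  | rel i j =>
    intro V W _ _ _ _ σ τ h _ _
    exact not_congr (h i (by simp [freeVars]) j (by simp [freeVars]))
  | not φ ih =>
    intro V W _ _ _ _ σ τ h h1 h2
    exact not_congr (ih σ τ h h1 h2)
  | and φ ψ ihφ ihψ =>
    intro V W _ _ _ _ σ τ h h1 h2
    have sφ : φ.freeVars ⊆ (φ.and ψ).freeVars := Finset.subset_union_left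
    have sψ : ψ.freeVars ⊆ (φ.and ψ).freeVars := Finset.subset_union_right
    have dφ : φ.depth ≤ (φ.and ψ).depth := le_max_left _ _
    have dψ : ψ.depth ≤ (φ.and ψ).depth := le_max_right _ _
    exact and_congr
      (ihφ σ τ (fun i hi j hj => h i (sφ hi) j (sφ hj))
        (le_trans (by have := card_image_mono sφ σ; omega) h1)
        (le_trans (by have := card_image_mono sφ τ; omega) h2))
      (ihψ σ τ (fun i hi j hj => h i (sψ hi) j (sψ hj))
        (le_trans (by have := card_image_mono sψ σ; omega) h1)
        (le_trans (by have := card_image_mono sψ τ; omega) h2))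
  | or φ ψ ihφ ihψ =>
    intro V W _ _ _ _ σ τ h h1 h2
    have sφ : φ.freeVars ⊆ (φ.or ψ).freeVars := Finset.subset_union_left
    have sψ : ψ.freeVars ⊆ (φ.or ψ).freeVars := Finset.subset_union_right
    have dφ : φ.depth ≤ (φ.or ψ).depth := le_max_left _ _
    have dψ : ψ.depth ≤ (φ.or ψ).depth := le_max_right _ _
    exact or_congr
      (ihφ σ τ (fun i hi j hj => h i (sφ hi) j (sφ hj))
        (le_trans (by have := card_image_mono sφ σ; omega) h1)
        (le_trans (by have := card_image_mono sφ τ; omega) h2))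
      (ihψ σ τ (fun i hi j hj => h i (sψ hi) j (sψ hj))
        (le_trans (by have := card_image_mono sψ σ; omega) h1)
        (le_trans (by have := card_image_mono sψ τ; omega) h2))
  | all i φ ih =>
    intro V W _ _ _ _ σ τ h h1 h2
    simp only [eval, freeVars, depth] at *
    constructor
    · intro hall w
      obtain ⟨v, hvw⟩ := match_step φ.freeVars i τ σ
        (fun j hj k hk => (h j hj k hk).symm) (by omega) w
      have hvw' : ∀ j ∈ φ.freeVars, ∀ k ∈ φ.freeVars,
          (Function.update σ i v j = Function.update σ i v k ↔
            Function.update τ i w j = Function.update τ i w k) :=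
        fun j hj k hk => (hvw j hj k hk).symm
      refine (ih (Function.update σ i v) (Function.update τ i w) hvw' ?_ ?_).mp (hall v)
      · have := card_image_update_le φ.freeVars i σ v; omega
      · have := card_image_update_le φ.freeVars i τ w; omega
    · intro hall v
      obtain ⟨w, hvw⟩ := match_step φ.freeVars i σ τ h (by omega) v
      refine (ih (Function.update σ i v) (Function.update τ i w) hvw ?_ ?_).mpr (hall w)
      · have := card_image_update_le φ.freeVars i σ v; omega
      · have := card_image_update_le φ.freeVars i τ w; omega
  | ex i φ ih =>
    intro V W _ _ _ _ σ τ h h1 h2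
    simp only [eval, freeVars, depth] at *
    constructor
    · rintro ⟨v, hv⟩
      obtain ⟨w, hvw⟩ := match_step φ.freeVars i σ τ h (by omega) v
      refine ⟨w, (ih (Function.update σ i v) (Function.update τ i w) hvw ?_ ?_).mp hv⟩
      · have := card_image_update_le φ.freeVars i σ v; omega
      · have := card_image_update_le φ.freeVars i τ w; omega
    · rintro ⟨w, hw⟩
      obtain ⟨v, hvw⟩ := match_step φ.freeVars i τ σ
        (fun j hj k hk => (h j hj k hk).symm) (by omega) w
      refine ⟨v, (ih (Function.update σ i v) (Function.update τ i w)
        (fun j hj k hk => (hvw j hj k hk).symm) ?_ ?_).mpr hw⟩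
      · have := card_image_update_le φ.freeVars i σ v; omega
      · have := card_image_update_le φ.freeVars i τ w; omega

end Fml
end PaperFO

namespace PaperFO
namespace Fml

/-! ### Syntactic machinery for the defining sentence -/

/-- `exs k φ` prefixes `φ` with `∃ x_{k-1} … ∃ x_0`. -/
def exs : ℕ → Fml → Fml
  | 0, φ => φ
  | k + 1, φ => ex k (exs k φ)

/-- `alls k φ` prefixes `φ` with `∀ x_{k-1} … ∀ x_0`. -/
def alls : ℕ → Fml → Fml
  | 0, φ => φ
  | k + 1, φ => all k (alls k φ)

/-- `x_i ≠ x_j` for all `i < k`. -/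
def diffAll (j : ℕ) : ℕ → Fml
  | 0 => Fml.eq 0 0
  | i + 1 => Fml.and (Fml.not (Fml.eq i j)) (diffAll j i)

/-- `x_0, …, x_{k-1}` pairwise distinct. -/
def pairwiseNe : ℕ → Fml
  | 0 => Fml.eq 0 0
  | j + 1 => Fml.and (diffAll j j) (pairwiseNe j)

/-- `x_i = x_j` for some `i < k`. -/
def eqOne (j : ℕ) : ℕ → Fml
  | 0 => Fml.not (Fml.eq 0 0)
  | i + 1 => Fml.or (Fml.eq i j) (eqOne j i)

/-- `x_i = x_j` for some `i < j < k`. -/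
def eqSome : ℕ → Fml
  | 0 => Fml.not (Fml.eq 0 0)
  | j + 1 => Fml.or (eqOne j j) (eqSome j)

/-- The defining sentence for `K_n`. -/
def defK (n : ℕ) : Fml :=
  Fml.and (Fml.and (exs n (pairwiseNe n)) (alls (n + 1) (eqSome (n + 1))))
    (alls 2 (Fml.or (Fml.eq 0 1) (Fml.rel 0 1)))

/-! ### Depth computations -/

lemma depth_exs (k : ℕ) (φ : Fml) : (exs k φ).depth = k + φ.depth := by
  induction k with
  | zero => simp [exs]
  | succ k ih => simp [exs, depth, ih]; omega

lemma depth_alls (k : ℕ) (φ : Fml) : (alls k φ).depth = k + φ.depth := by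
  induction k with
  | zero => simp [alls]
  | succ k ih => simp [alls, depth, ih]; omega

lemma depth_diffAll (j k : ℕ) : (diffAll j k).depth = 0 := by
  induction k with
  | zero => rfl
  | succ k ih => simp [diffAll, depth, ih]

lemma depth_pairwiseNe (k : ℕ) : (pairwiseNe k).depth = 0 := by
  induction k with
  | zero => rfl
  | succ k ih => simp [pairwiseNe, depth, ih, depth_diffAll]

lemma depth_eqOne (j k : ℕ) : (eqOne j k).depth = 0 := by
  induction k with
  | zero => rfl
  | succ k ih => simp [eqOne, depth, ih]

lemma depth_eqSome (k : ℕ) : (eqSome k).depth = 0 := by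
  induction k with
  | zero => rfl
  | succ k ih => simp [eqSome, depth, ih, depth_eqOne]

lemma depth_defK (n : ℕ) (hn : 1 ≤ n) : (defK n).depth = n + 1 := by
  have h1 : (exs n (pairwiseNe n)).depth = n := by
    rw [depth_exs, depth_pairwiseNe]
    omega

  have h2 : (alls (n + 1) (eqSome (n + 1))).depth = n + 1 := by
    rw [depth_alls, depth_eqSome]
  have h3 : (alls 2 (Fml.or (Fml.eq 0 1) (Fml.rel 0 1))).depth = 2 := by
    rw [depth_alls]
    rfl
  show max (max (exs n (pairwiseNe n)).depth
      (alls (n + 1) (eqSome (n + 1))).depth)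
      (alls 2 (Fml.or (Fml.eq 0 1) (Fml.rel 0 1))).depth = n + 1
  rw [h1, h2, h3]
  omega

/-! ### NegAtomic -/

lemma negAtomic_exs (k : ℕ) (φ : Fml) (h : φ.NegAtomic) : (exs k φ).NegAtomic := by
  induction k with
  | zero => exact h
  | succ k ih => exact ih

lemma negAtomic_alls (k : ℕ) (φ : Fml) (h : φ.NegAtomic) : (alls k φ).NegAtomic := by
  induction k with
  | zero => exact h
  | succ k ih => exact ih

lemma negAtomic_diffAll (j k : ℕ) : (diffAll j k).NegAtomic := by
  induction k with
  | zero => trivial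
  | succ k ih => exact ⟨trivial, ih⟩

lemma negAtomic_pairwiseNe (k : ℕ) : (pairwiseNe k).NegAtomic := by
  induction k with
  | zero => trivial
  | succ k ih => exact ⟨negAtomic_diffAll k k, ih⟩

lemma negAtomic_eqOne (j k : ℕ) : (eqOne j k).NegAtomic := by
  induction k with
  | zero => trivial
  | succ k ih => exact ⟨trivial, ih⟩

lemma negAtomic_eqSome (k : ℕ) : (eqSome k).NegAtomic := by
  induction k with
  | zero => trivial
  | succ k ih => exact ⟨negAtomic_eqOne k k, ih⟩

/-! ### Quantifier strings -/

lemma qstrings_diffAll (j k : ℕ) : (diffAll j k).qstrings = {[]} := by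
  induction k with
  | zero => rfl
  | succ k ih => simp [diffAll, qstrings, ih]

lemma qstrings_pairwiseNe (k : ℕ) : (pairwiseNe k).qstrings = {[]} := by
  induction k with
  | zero => rfl
  | succ k ih => simp [pairwiseNe, qstrings, ih, qstrings_diffAll]

lemma qstrings_eqOne (j k : ℕ) : (eqOne j k).qstrings = {[]} := by
  induction k with
  | zero => rfl
  | succ k ih => simp [eqOne, qstrings, ih]

lemma qstrings_eqSome (k : ℕ) : (eqSome k).qstrings = {[]} := by
  induction k with
  | zero => rfl
  | succ k ih => simp [eqSome, qstrings, ih, qstrings_eqOne]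

lemma qstrings_exs (k : ℕ) (φ : Fml) (h : φ.qstrings = {[]}) :
    (exs k φ).qstrings = {List.replicate k true} := by
  induction k with
  | zero => simpa [exs] using h
  | succ k ih => simp [exs, qstrings, ih, List.replicate_succ]

lemma qstrings_alls (k : ℕ) (φ : Fml) (h : φ.qstrings = {[]}) :
    (alls k φ).qstrings = {List.replicate k false} := by
  induction k with
  | zero => simpa [alls] using h
  | succ k ih => simp [alls, qstrings, ih, List.replicate_succ]

end Fml

lemma altCount_replicate (k : ℕ) (b : Bool) : altCount (List.replicate k b) = 0 := by
  induction k with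
  | zero => rfl
  | succ k ih =>
    cases k with
    | zero => rfl
    | succ m =>
      simp only [List.replicate_succ, altCount] at *
      simpa using ih

namespace Fml

lemma zeroAlt_defK (n : ℕ) : (defK n).ZeroAlt := by
  constructor
  · exact ⟨⟨negAtomic_exs _ _ (negAtomic_pairwiseNe n),
      negAtomic_alls _ _ (negAtomic_eqSome (n + 1))⟩,
      negAtomic_alls _ _ ⟨trivial, trivial⟩⟩
  · intro s hs
    have q1 : (exs n (pairwiseNe n)).qstrings = {List.replicate n true} :=
      qstrings_exs _ _ (qstrings_pairwiseNe n)
    have q2 : (alls (n + 1) (eqSome (n + 1))).qstrings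
        = {List.replicate (n + 1) false} :=
      qstrings_alls _ _ (qstrings_eqSome (n + 1))
    have q3 : (alls 2 (Fml.or (Fml.eq 0 1) (Fml.rel 0 1))).qstrings
        = {List.replicate 2 false} := by
      apply qstrings_alls
      show ({([] : List Bool)} ∪ {[]} : Set _) = {[]}
      simp
    have hq : (defK n).qstrings = ({List.replicate n true}
        ∪ {List.replicate (n + 1) false}) ∪ {List.replicate 2 false} := by
      show ((exs n (pairwiseNe n)).qstrings
          ∪ (alls (n + 1) (eqSome (n + 1))).qstrings)
          ∪ (alls 2 (Fml.or (Fml.eq 0 1) (Fml.rel 0 1))).qstrings = _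
      rw [q1, q2, q3]
    rw [hq] at hs
    rcases hs with (h | h) | h <;>
      · simp only [Set.mem_singleton_iff] at h
        rw [h]
        exact Nat.le_of_eq (altCount_replicate _ _)

/-! ### Free variables -/

lemma freeVars_exs_subset (k : ℕ) (φ : Fml) :
    (exs k φ).freeVars ⊆ φ.freeVars \ Finset.range k := by
  induction k with
  | zero => simp [exs]
  | succ k ih =>
    intro x hx
    simp only [exs, freeVars, Finset.mem_erase] at hx
    obtain ⟨hxk, hx⟩ := hx
    have := ih hx
    simp only [Finset.mem_sdiff, Finset.mem_range] at this ⊢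
    refine ⟨this.1, ?_⟩
    intro hlt
    rcases Nat.lt_succ_iff_lt_or_eq.mp hlt with h | h
    · exact this.2 h
    · exact hxk h

lemma freeVars_alls_subset (k : ℕ) (φ : Fml) :
    (alls k φ).freeVars ⊆ φ.freeVars \ Finset.range k := by
  induction k with
  | zero => simp [alls]
  | succ k ih =>
    intro x hx
    simp only [alls, freeVars, Finset.mem_erase] at hx
    obtain ⟨hxk, hx⟩ := hx
    have := ih hx
    simp only [Finset.mem_sdiff, Finset.mem_range] at this ⊢
    refine ⟨this.1, ?_⟩
    intro hlt
    rcases Nat.lt_succ_iff_lt_or_eq.mp hlt with h | h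
    · exact this.2 h
    · exact hxk h

lemma freeVars_diffAll (j k : ℕ) : (diffAll j k).freeVars ⊆ Finset.range (max (max (j+1) k) 1) := by
  induction k with
  | zero =>
    intro x hx
    simp [diffAll, freeVars] at hx
    simp [hx]
  | succ k ih =>
    intro x hx
    simp only [diffAll, freeVars, Finset.mem_union] at hx
    rcases hx with hx | hx
    · simp only [freeVars, Finset.mem_insert, Finset.mem_singleton] at hx
      simp only [Finset.mem_range]
      omega
    · have := ih hx
      simp only [Finset.mem_range] at this ⊢
      omega

lemma freeVars_pairwiseNe (k : ℕ) : (pairwiseNe k).freeVars ⊆ Finset.range (max k 1) := by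
  induction k with
  | zero =>
    intro x hx
    simp [pairwiseNe, freeVars] at hx
    simp [hx]
  | succ k ih =>
    intro x hx
    simp only [pairwiseNe, freeVars, Finset.mem_union] at hx
    rcases hx with hx | hx
    · have := freeVars_diffAll k k hx
      simp only [Finset.mem_range] at this ⊢
      omega
    · have := ih hx
      simp only [Finset.mem_range] at this ⊢
      omega

lemma freeVars_eqOne (j k : ℕ) : (eqOne j k).freeVars ⊆ Finset.range (max (max (j+1) k) 1) := by
  induction k with
  | zero =>
    intro x hx
    simp [eqOne, freeVars] at hx
    simp [hx]
  | succ k ih =>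
    intro x hx
    simp only [eqOne, freeVars, Finset.mem_union] at hx
    rcases hx with hx | hx
    · simp only [freeVars, Finset.mem_insert, Finset.mem_singleton] at hx
      simp only [Finset.mem_range]
      omega
    · have := ih hx
      simp only [Finset.mem_range] at this ⊢
      omega

lemma freeVars_eqSome (k : ℕ) : (eqSome k).freeVars ⊆ Finset.range (max k 1) := by
  induction k with
  | zero =>
    intro x hx
    simp [eqSome, freeVars] at hx
    simp [hx]
  | succ k ih =>
    intro x hx
    simp only [eqSome, freeVars, Finset.mem_union] at hx
    rcases hx with hx | hx
    · have := freeVars_eqOne k k hx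
      simp only [Finset.mem_range] at this ⊢
      omega
    · have := ih hx
      simp only [Finset.mem_range] at this ⊢
      omega

lemma isSentence_defK (n : ℕ) (hn : 1 ≤ n) : (defK n).IsSentence := by
  have h1 : (exs n (pairwiseNe n)).freeVars = ∅ := by
    rw [Finset.eq_empty_iff_forall_notMem]
    intro x hx
    have := freeVars_exs_subset n (pairwiseNe n) hx
    simp only [Finset.mem_sdiff, Finset.mem_range] at this
    have h2 := freeVars_pairwiseNe n this.1
    simp only [Finset.mem_range] at h2
    omega
  have h2 : (alls (n+1) (eqSome (n+1))).freeVars = ∅ := by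
    rw [Finset.eq_empty_iff_forall_notMem]
    intro x hx
    have := freeVars_alls_subset (n+1) (eqSome (n+1)) hx
    simp only [Finset.mem_sdiff, Finset.mem_range] at this
    have h2 := freeVars_eqSome (n+1) this.1
    simp only [Finset.mem_range] at h2
    omega
  have h3 : (alls 2 (Fml.or (Fml.eq 0 1) (Fml.rel 0 1))).freeVars = ∅ := by
    rw [Finset.eq_empty_iff_forall_notMem]
    intro x hx
    have := freeVars_alls_subset 2 _ hx
    simp only [Finset.mem_sdiff, Finset.mem_range, freeVars, Finset.mem_union,
      Finset.mem_insert, Finset.mem_singleton] at this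
    omega
  show ((exs n (pairwiseNe n)).freeVars
      ∪ (alls (n + 1) (eqSome (n + 1))).freeVars)
      ∪ (alls 2 (Fml.or (Fml.eq 0 1) (Fml.rel 0 1))).freeVars = ∅
  rw [h1, h2, h3]
  simp

end Fml
end PaperFO

namespace PaperFO
namespace Fml

/-! ### Semantics of the building blocks -/

lemma eval_exs {V : Type} (r : V → V → Prop) (φ : Fml) :
    ∀ (k : ℕ) (σ : ℕ → V),
      (exs k φ).eval r σ ↔ ∃ τ : ℕ → V, (∀ i, k ≤ i → τ i = σ i) ∧ φ.eval r τ := by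
  intro k
  induction k with
  | zero =>
    intro σ
    constructor
    · intro h; exact ⟨σ, fun i _ => rfl, h⟩
    · rintro ⟨τ, hτ, h⟩
      have : τ = σ := funext fun i => hτ i (Nat.zero_le i)
      rwa [← this]
  | succ k ih =>
    intro σ
    simp only [exs, eval]
    constructor
    · rintro ⟨v, hv⟩
      obtain ⟨τ, hτ, h⟩ := (ih _).mp hv
      refine ⟨τ, ?_, h⟩
      intro i hi
      rw [hτ i (by omega), Function.update_of_ne (by omega)]
    · rintro ⟨τ, hτ, h⟩
      refine ⟨τ k, (ih _).mpr ⟨τ, ?_, h⟩⟩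
      intro i hi
      rcases Nat.eq_or_lt_of_le hi with hik | hik
      · rw [← hik, Function.update_self]
      · rw [hτ i hik, Function.update_of_ne (by omega)]

lemma eval_alls {V : Type} (r : V → V → Prop) (φ : Fml) :
    ∀ (k : ℕ) (σ : ℕ → V),
      (alls k φ).eval r σ ↔ ∀ τ : ℕ → V, (∀ i, k ≤ i → τ i = σ i) → φ.eval r τ := by
  intro k
  induction k with
  | zero =>
    intro σ
    constructor
    · intro h τ hτ
      have : τ = σ := funext fun i => hτ i (Nat.zero_le i)
      rwa [this]
    · intro h; exact h σ fun i _ => rfl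
  | succ k ih =>
    intro σ
    simp only [alls, eval]
    constructor
    · intro h τ hτ
      refine (ih _).mp (h (τ k)) τ ?_
      intro i hi
      rcases Nat.eq_or_lt_of_le hi with hik | hik
      · rw [← hik, Function.update_self]
      · rw [hτ i hik, Function.update_of_ne (by omega)]
    · intro h v
      refine (ih _).mpr ?_
      intro τ hτ
      refine h τ ?_
      intro i hi
      rw [hτ i (by omega), Function.update_of_ne (by omega)]

lemma eval_diffAll {V : Type} (r : V → V → Prop) (j : ℕ) :
    ∀ (k : ℕ) (σ : ℕ → V), (diffAll j k).eval r σ ↔ ∀ i < k, σ i ≠ σ j := by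
  intro k
  induction k with
  | zero => intro σ; simp [diffAll, eval]
  | succ k ih =>
    intro σ
    simp only [diffAll, eval, ih]
    constructor
    · rintro ⟨h1, h2⟩ i hi
      rcases Nat.lt_succ_iff_lt_or_eq.mp hi with h | h
      · exact h2 i h
      · rwa [h]
    · intro h
      exact ⟨h k (Nat.lt_succ_self k), fun i hi => h i (by omega)⟩

lemma eval_pairwiseNe {V : Type} (r : V → V → Prop) :
    ∀ (k : ℕ) (σ : ℕ → V),
      (pairwiseNe k).eval r σ ↔ ∀ i j, i < j → j < k → σ i ≠ σ j := by
  intro k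
  induction k with
  | zero => intro σ; simp [pairwiseNe, eval]
  | succ k ih =>
    intro σ
    simp only [pairwiseNe, eval, ih, eval_diffAll]
    constructor
    · rintro ⟨h1, h2⟩ i j hij hjk
      rcases Nat.lt_succ_iff_lt_or_eq.mp hjk with h | h
      · exact h2 i j hij h
      · rw [h]; exact h1 i (h ▸ hij)
    · intro h
      exact ⟨fun i hi => h i k hi (Nat.lt_succ_self k),
        fun i j hij hjk => h i j hij (by omega)⟩

lemma eval_eqOne {V : Type} (r : V → V → Prop) (j : ℕ) :
    ∀ (k : ℕ) (σ : ℕ → V), (eqOne j k).eval r σ ↔ ∃ i < k, σ i = σ j := by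
  intro k
  induction k with
  | zero => intro σ; simp [eqOne, eval]
  | succ k ih =>
    intro σ
    simp only [eqOne, eval, ih]
    constructor
    · rintro (h | ⟨i, hi, h⟩)
      · exact ⟨k, Nat.lt_succ_self k, h⟩
      · exact ⟨i, by omega, h⟩
    · rintro ⟨i, hi, h⟩
      rcases Nat.lt_succ_iff_lt_or_eq.mp hi with h' | h'
      · exact Or.inr ⟨i, h', h⟩
      · exact Or.inl (h' ▸ h)

lemma eval_eqSome {V : Type} (r : V → V → Prop) :
    ∀ (k : ℕ) (σ : ℕ → V),
      (eqSome k).eval r σ ↔ ∃ j < k, ∃ i < j, σ i = σ j := by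
  intro k
  induction k with
  | zero => intro σ; simp [eqSome, eval]
  | succ k ih =>
    intro σ
    simp only [eqSome, eval, ih, eval_eqOne]
    constructor
    · rintro (⟨i, hi, h⟩ | ⟨j, hj, i, hi, h⟩)
      · exact ⟨k, Nat.lt_succ_self k, i, hi, h⟩
      · exact ⟨j, by omega, i, hi, h⟩
    · rintro ⟨j, hj, i, hi, h⟩
      rcases Nat.lt_succ_iff_lt_or_eq.mp hj with h' | h'
      · exact Or.inr ⟨j, h', i, hi, h⟩
      · exact Or.inl ⟨i, h' ▸ hi, h' ▸ h⟩

end Fml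
end PaperFO

namespace PaperFO

open Fml

lemma gModels_defK (n : ℕ) (hn : 1 ≤ n) :
    GModels (⊤ : SimpleGraph (Fin n)) (defK n) := by
  intro σ
  refine ⟨⟨?_, ?_⟩, ?_⟩
  · -- there exist n pairwise distinct vertices
    rw [eval_exs]
    refine ⟨fun i => if h : i < n then ⟨i, h⟩ else σ i, ?_, ?_⟩
    · intro i hi
      simp [Nat.not_lt.mpr hi]
    · rw [eval_pairwiseNe]
      intro i j hij hjn
      simp only [dif_pos (lt_trans hij hjn), dif_pos hjn]
      intro hcon
      exact absurd (Fin.mk.injEq _ _ _ _ ▸ hcon) (by omega)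
  · -- among any n+1 vertices two coincide
    rw [eval_alls]
    intro τ _
    rw [eval_eqSome]
    have : ¬ Function.Injective (fun k : Fin (n + 1) => τ k.val) := by
      intro hinj
      have := Fintype.card_le_of_injective _ hinj
      simp [Fintype.card_fin] at this
    rw [Function.not_injective_iff] at this
    obtain ⟨k, l, hkl, hne⟩ := this
    rcases lt_trichotomy k.val l.val with h | h | h
    · exact ⟨l.val, l.isLt, k.val, h, hkl⟩
    · exact absurd (Fin.ext h) hne
    · exact ⟨k.val, k.isLt, l.val, h, hkl.symm⟩
  · -- any two distinct vertices are adjacent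
    rw [eval_alls]
    intro τ _
    show τ 0 = τ 1 ∨ (⊤ : SimpleGraph (Fin n)).Adj (τ 0) (τ 1)
    rcases eq_or_ne (τ 0) (τ 1) with h | h
    · exact Or.inl h
    · exact Or.inr (by simpa using h)

lemma defines_defK (n : ℕ) (hn : 1 ≤ n) :
    Defines (⊤ : SimpleGraph (Fin n)) (defK n) := by
  refine ⟨isSentence_defK n hn, gModels_defK n hn, ?_⟩
  intro W _ _ H hiso hM
  apply hiso
  obtain ⟨⟨hA, hB⟩, hC⟩ := hM (fun _ => Classical.arbitrary W)
  rw [eval_exs] at hA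
  obtain ⟨τ, hτ, hpw⟩ := hA
  rw [eval_pairwiseNe] at hpw
  -- card W ≥ n
  have hge : n ≤ Fintype.card W := by
    have hinj : Function.Injective (fun i : Fin n => τ i.val) := by
      intro i j hij
      by_contra hne
      rcases lt_trichotomy i.val j.val with h | h | h
      · exact hpw i.val j.val h j.isLt hij
      · exact hne (Fin.ext h)
      · exact hpw j.val i.val h i.isLt hij.symm
    simpa using Fintype.card_le_of_injective _ hinj
  -- card W ≤ n
  have hle : Fintype.card W ≤ n := by
    by_contra hlt
    push_neg at hlt
    have : Fintype.card (Fin (n + 1)) ≤ Fintype.card W := by simpa using hlt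
    obtain ⟨f⟩ := Function.Embedding.nonempty_of_card_le this
    rw [eval_alls] at hB
    have := hB (fun i => if h : i < n + 1 then f ⟨i, h⟩ else Classical.arbitrary W)
      (by intro i hi; simp [Nat.not_lt.mpr hi])
    rw [eval_eqSome] at this
    obtain ⟨j, hj, i, hij, hcon⟩ := this
    simp only [dif_pos hj, dif_pos (lt_trans hij hj)] at hcon
    have := f.injective hcon
    rw [Fin.mk.injEq] at this
    omega
  -- H is complete
  have hcomp : ∀ a b : W, a ≠ b → H.Adj a b := by
    intro a b hab
    obtain ⟨-, hC'⟩ := hM (fun _ => b)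
    rw [eval_alls] at hC'
    have := hC' (fun i => if i = 0 then a else b)
      (by intro i hi; simp [show i ≠ 0 by omega])
    rcases this with h | h
    · exact absurd h hab
    · exact h
  have e : Fin n ≃ W := Fintype.equivOfCardEq (by simp; omega)
  exact ⟨⟨e, by
    intro a b
    simp only [SimpleGraph.top_adj]
    constructor
    · intro h
      exact fun hab => h.ne (congrArg e hab)
    · intro h
      exact hcomp _ _ (fun hcon => h (e.injective hcon))⟩⟩

end PaperFO

namespace PaperFO
theorem statement_19 (n : ℕ) (hn : 1 ≤ n) :
    (∀ φ : Fml, Defines (⊤ : SimpleGraph (Fin n)) φ → n + 1 ≤ φ.depth) ∧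
    (∃ φ : Fml, φ.ZeroAlt ∧ Defines (⊤ : SimpleGraph (Fin n)) φ ∧
      φ.depth = n + 1) := by
  constructor
  · intro φ hdef
    by_contra hlt
    push_neg at hlt
    have hd : φ.depth ≤ n := by omega
    obtain ⟨hsent, hmod, hrej⟩ := hdef
    have hK' : GModels (⊤ : SimpleGraph (Fin (n + 1))) φ := by
      intro τ
      have hn0 : 0 < n := hn
      set σ₀ : ℕ → Fin n := fun _ => ⟨0, hn0⟩ with hσ₀
      rw [Fml.eval_congr_s19 (fun a b => SimpleGraph.top_adj a b) φ τ]
      refine (Fml.ef φ σ₀ τ ?_ ?_ ?_).mp ?_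
      · rw [hsent]; intro i hi; simp at hi
      · rw [hsent]; simpa using hd
      · rw [hsent]; simp; omega
      · rw [← Fml.eval_congr_s19 (fun a b => SimpleGraph.top_adj a b) φ σ₀]
        exact hmod σ₀
    refine hrej (Fin (n + 1)) inferInstance inferInstance ⊤ ?_ hK'
    rintro ⟨e⟩
    have := Fintype.card_congr e.toEquiv
    simp at this
  · exact ⟨Fml.defK n, Fml.zeroAlt_defK n, defines_defK n hn, Fml.depth_defK n hn⟩

end PaperFO
end
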